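/- arXiv:1708.00222 — 3 statements merged into one kernel-verified Lean document; each statement's English description precedes it below -/
import Mathlib

section
/- Let a > 0, q > 0 and c ≥ q/4 be real numbers, set T = 3/(q - 6c) and let f(t) = a·(((6c - q)/3)·t + 1)^{q/(2q - 12c)}. Define k : ℝ → ℝ by k(t) = (1/c)·((a/f(t))^{6c/q} - 1). Then k(0) = 0, 1 + c·k(t) > 0 for every t ∈ (T, +∞), and k satisfies the differential equation k′(t) = (a²/f(t)²)·(1/(1 + c·k(t))) at every t ∈ (T, +∞). -/
/-!
Put `u t = ((6c - q)/3) t + 1`, which is positive exactly on `(T, ∞)`. There `f = a u^p` with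
`p = q/(2q - 12c)`, so `a / f = u^(-p)` and `1 + c k = (a / f)^(6c/q) = u^α` with `α = 3c/(6c - q)`.
The exponents satisfy `α u' = c` and `α + p = 1/2`, and for any power profile with these two
relations the ODE `k' = (a/f)² / (1 + c k)` reduces to `u^(α-1) = u^(-2p-α)`.
-/

open Real Filter Topology

lemma div_mul_rpow_rpow {a x : ℝ} (ha : a ≠ 0) (hx : 0 ≤ x) (p r : ℝ) :
    (a / (a * x ^ p)) ^ r = x ^ (-p * r) := by
  rw [div_mul_cancel_left₀ ha, ← rpow_neg hx, rpow_mul hx]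

lemma one_add_mul_one_div_mul_sub_one {c : ℝ} (hc : c ≠ 0) (y : ℝ) :
    1 + c * (1 / c * (y - 1)) = y := by
  field_simp
  ring

theorem hasDerivAt_one_div_mul_rpow_sub_one {u : ℝ → ℝ} {a b c p α t : ℝ} (ha : a ≠ 0)
    (hc : c ≠ 0) (hαb : α * b = c) (hαp : α + p = 1 / 2) (hu : HasDerivAt u b t)
    (hut : 0 < u t) :
    HasDerivAt (fun s => 1 / c * (u s ^ α - 1))
      (a ^ 2 / (a * u t ^ p) ^ 2 * (1 / (1 + c * (1 / c * (u t ^ α - 1))))) t := by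
  refine (((hu.rpow_const (Or.inl hut.ne')).sub_const 1).const_mul (1 / c)).congr_deriv ?_
  have hexp : (u t ^ p) ^ 2 * u t ^ α * u t ^ (α - 1) = 1 := by
    rw [← rpow_natCast, ← rpow_mul hut.le, ← rpow_add hut, ← rpow_add hut,
      show p * (2 : ℕ) + α + (α - 1) = 0 by push_cast; linear_combination 2 * hαp, rpow_zero]
  rw [one_add_mul_one_div_mul_sub_one hc]
  field_simp
  linear_combination b * α * hexp + hαb

lemma warping_exponents {q c : ℝ} (hq : q ≠ 0) (h : 6 * c - q ≠ 0) :
    -(q / (2 * q - 12 * c)) * (6 * c / q) = 3 * c / (6 * c - q) ∧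
    3 * c / (6 * c - q) * ((6 * c - q) / 3) = c ∧
    3 * c / (6 * c - q) + q / (2 * q - 12 * c) = 1 / 2 := by
  have h' : 2 * q - 12 * c ≠ 0 := by contrapose! h; linarith
  refine ⟨?_, ?_, ?_⟩
  · rw [← neg_div, div_mul_div_comm, div_eq_div_iff (mul_ne_zero h' hq) h]; ring
  · rw [div_mul_div_comm, div_eq_iff (mul_ne_zero h three_ne_zero)]; ring
  · rw [div_add_div _ _ h h', div_eq_iff (mul_ne_zero h h')]; ring

/-- The deformation coefficient `k(t) = (1/c) ((a / f t)^(6c/q) - 1)` from the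
proof of Theorem 5.4 of the paper satisfies `k 0 = 0`, `1 + c k t > 0` on
`(T, ∞)`, and the ODE `k' = (a²/f²) (1 + c k)⁻¹` there. -/
theorem stmt_3 (a q c : ℝ) (ha : 0 < a) (hq : 0 < q) (hc : q / 4 ≤ c)
    (T : ℝ) (hT : T = 3 / (q - 6 * c)) (f k : ℝ → ℝ)
    (hf : ∀ t : ℝ, f t = a * ((6 * c - q) / 3 * t + 1) ^ (q / (2 * q - 12 * c)))
    (hk : ∀ t : ℝ, k t = (1 / c) * ((a / f t) ^ (6 * c / q) - 1)) :
    k 0 = 0 ∧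
    ∀ t ∈ Set.Ioi T,
      0 < 1 + c * k t ∧
      HasDerivAt k (a ^ 2 / (f t) ^ 2 * (1 / (1 + c * k t))) t := by
  have hc0 : 0 < c := by linarith
  have hb : 0 < (6 * c - q) / 3 := by linarith
  obtain ⟨hkα, hαb, hαp⟩ := warping_exponents hq.ne' (c := c) (by linarith)
  set u : ℝ → ℝ := fun s => (6 * c - q) / 3 * s + 1 with hu_def
  have hu : ∀ t, HasDerivAt u ((6 * c - q) / 3) t := fun t =>
    (((hasDerivAt_id' t).const_mul _).add_const 1).congr_deriv (mul_one _)
  have hk_u : ∀ s, 0 < u s → k s = 1 / c * (u s ^ (3 * c / (6 * c - q)) - 1) := by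
    intro s hus
    rw [hk, hf, div_mul_rpow_rpow ha.ne' hus.le, hkα]
  refine ⟨by simp [hk, hf, ha.ne'], fun t ht => ?_⟩
  have hut : 0 < u t := by
    have hbT : (6 * c - q) / 3 * T = -1 := by
      rw [hT, div_mul_div_comm, div_eq_iff (mul_ne_zero three_ne_zero (by linarith))]; ring
    have : u t = (6 * c - q) / 3 * (t - T) := by rw [hu_def, mul_sub, hbT]; ring
    exact this ▸ mul_pos hb (sub_pos.2 ht)
  have hu_pos : ∀ᶠ s in 𝓝 t, 0 < u s := (hu t).continuousAt.eventually (lt_mem_nhds hut)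
  rw [hk_u t hut, hf t, one_add_mul_one_div_mul_sub_one hc0.ne']
  refine ⟨rpow_pos_of_pos hut _, ?_⟩
  have hderiv := hasDerivAt_one_div_mul_rpow_sub_one ha.ne' hc0.ne' hαb hαp (hu t) hut
  rw [one_add_mul_one_div_mul_sub_one hc0.ne'] at hderiv
  exact hderiv.congr_of_eventuallyEq (hu_pos.mono hk_u)
end

section
/- Let a > 0, q > 0 and c ≥ q/4 be real numbers, and set T = 3/(q - 6c). Define f, k : ℝ → ℝ by f(t) = a·(((6c - q)/3)·t + 1)^{q/(2q - 12c)} and k(t) = (1/c)·((a/f(t))^{6c/q} - 1). Then (f, k) solves the coupled system of ordinary differential equations f′(t) = -(q/6)·(a²/f(t))·(1/(1 + c·k(t)))², k′(t) = (a²/f(t)²)·(1/(1 + c·k(t))) for every t ∈ (T, +∞), with initial conditions f(0) = a and k(0) = 0. -/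
/-!
With `m = (6c - q)/3 > 0` and `x(t) = m t + 1`, which is positive exactly on `(T, ∞)`, one has
`f = a x^p` with `p = -q/(6m)` and `1 + c k = (a/f)^{6c/q} = x^{c/m}`. Both sides of each equation
are then constant multiples of powers of `x`, and they agree because `m p = -q/6`, `m (c/m) = c`
and `2 (p + c/m) = 1`.
-/

open Real Filter Topology

theorem hasDerivAt_mul_add_one (m t : ℝ) : HasDerivAt (fun s => m * s + 1) m t := by
  simpa using ((hasDerivAt_id t).const_mul m).add_const 1

theorem rpow_mul_rpow_mul_rpow_mul_rpow_eq_one {x : ℝ} (hx : 0 < x) {u v w z : ℝ}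
    (h : u + v + w + z = 0) : x ^ u * x ^ v * x ^ w * x ^ z = 1 := by
  rw [← rpow_add hx, ← rpow_add hx, ← rpow_add hx, h, rpow_zero]

section PowerAnsatz

variable {a c m p r ν t : ℝ}

theorem hasDerivAt_warping_ansatz (ha : a ≠ 0) (ht : 0 < m * t + 1) (hmp : m * p = -ν)
    (hpr : 2 * (p + r) = 1) :
    HasDerivAt (fun s => a * (m * s + 1) ^ p)
      (-ν * (a ^ 2 / (a * (m * t + 1) ^ p)) * (1 / (m * t + 1) ^ r) ^ 2) t := by
  refine (((hasDerivAt_mul_add_one m t).rpow_const (p := p) (Or.inl ht.ne')).const_mul a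
    ).congr_deriv ?_
  have key := rpow_mul_rpow_mul_rpow_mul_rpow_eq_one ht (u := p - 1) (v := p) (w := r) (z := r)
    (by linarith)
  have := rpow_pos_of_pos ht p
  have := rpow_pos_of_pos ht r
  rw [hmp]
  field_simp
  linear_combination -ν * key

theorem hasDerivAt_deformation_ansatz (ha : a ≠ 0) (hc : c ≠ 0) (ht : 0 < m * t + 1)
    (hmr : m * r = c) (hpr : 2 * (p + r) = 1) :
    HasDerivAt (fun s => 1 / c * ((m * s + 1) ^ r - 1))
      (a ^ 2 / (a * (m * t + 1) ^ p) ^ 2 * (1 / (m * t + 1) ^ r)) t := by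
  refine ((((hasDerivAt_mul_add_one m t).rpow_const (p := r) (Or.inl ht.ne')).sub_const 1
    ).const_mul (1 / c)).congr_deriv ?_
  have key := rpow_mul_rpow_mul_rpow_mul_rpow_eq_one ht (u := r - 1) (v := p) (w := p) (z := r)
    (by linarith)
  have := rpow_pos_of_pos ht p
  have := rpow_pos_of_pos ht r
  rw [hmr]
  field_simp
  linear_combination key

end PowerAnsatz

theorem mul_add_one_pos_of_neg_one_div_lt {m t : ℝ} (hm : 0 < m) (ht : -1 / m < t) :
    0 < m * t + 1 := by
  have := (div_lt_iff₀ hm).1 ht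
  linarith

theorem one_add_mul_one_div_mul_div_rpow_sub_one {a c x : ℝ} (ha : a ≠ 0) (hc : c ≠ 0)
    (hx : 0 < x) (p e : ℝ) :
    1 + c * (1 / c * ((a / (a * x ^ p)) ^ e - 1)) = x ^ (-(p * e)) := by
  rw [div_mul_cancel_left₀ ha, ← rpow_neg hx.le, ← rpow_mul hx.le, neg_mul]
  field_simp
  ring

/-- The pair `(f, k)` from the proof of Theorem 5.4 of the paper solves the
coupled system `f' = -(q/6) (a²/f) (1 + c k)⁻²`, `k' = (a²/f²) (1 + c k)⁻¹`
on `(T, ∞)`, with initial conditions `f 0 = a`, `k 0 = 0`. -/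
theorem stmt_4 (a q c : ℝ) (ha : 0 < a) (hq : 0 < q) (hc : q / 4 ≤ c)
    (T : ℝ) (hT : T = 3 / (q - 6 * c)) (f k : ℝ → ℝ)
    (hf : ∀ t : ℝ, f t = a * ((6 * c - q) / 3 * t + 1) ^ (q / (2 * q - 12 * c)))
    (hk : ∀ t : ℝ, k t = (1 / c) * ((a / f t) ^ (6 * c / q) - 1)) :
    f 0 = a ∧ k 0 = 0 ∧
    ∀ t ∈ Set.Ioi T,
      HasDerivAt f (-(q / 6) * (a ^ 2 / f t) * (1 / (1 + c * k t)) ^ 2) t ∧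
      HasDerivAt k (a ^ 2 / (f t) ^ 2 * (1 / (1 + c * k t))) t := by
  have hc0 : 0 < c := by linarith
  set m := (6 * c - q) / 3 with hm_def
  set p := q / (2 * q - 12 * c) with hp_def
  have hm : 0 < m := by linarith
  have hp : p = -(q / (6 * m)) := by
    rw [hp_def, hm_def, show 6 * ((6 * c - q) / 3) = -(2 * q - 12 * c) by ring, div_neg, neg_neg]
  have hmp : m * p = -(q / 6) := by rw [hp]; field_simp
  have hpr : 2 * (p + c / m) = 1 := by rw [hp]; field_simp; rw [hm_def]; ring
  have hf0 : f 0 = a := by simp [hf]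
  refine ⟨hf0, by simp [hk, hf0, ha.ne'], fun t ht => ?_⟩
  have hT' : T = -1 / m := by rw [hT, hm_def, neg_div, one_div_div, ← div_neg, neg_sub]
  have hpos : ∀ s ∈ Set.Ioi T, 0 < m * s + 1 := fun s hs =>
    mul_add_one_pos_of_neg_one_div_lt hm (hT' ▸ hs)
  have hck : ∀ s ∈ Set.Ioi T, 1 + c * k s = (m * s + 1) ^ (c / m) := fun s hs => by
    rw [hk, hf, one_add_mul_one_div_mul_div_rpow_sub_one ha.ne' hc0.ne' (hpos s hs), hp]
    field_simp
  have hk_eq : k =ᶠ[𝓝 t] fun s => 1 / c * ((m * s + 1) ^ (c / m) - 1) :=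
    eventually_of_mem (Ioi_mem_nhds ht) fun s hs => by
      dsimp only
      rw [← hck s hs]; field_simp; ring
  rw [hck t ht, hf t, show f = fun s => a * (m * s + 1) ^ p from funext hf]
  exact ⟨hasDerivAt_warping_ansatz ha.ne' (hpos t ht) hmp hpr,
    (hasDerivAt_deformation_ansatz ha.ne' hc0.ne' (hpos t ht) (mul_div_cancel₀ c hm.ne') hpr
      ).congr_of_eventuallyEq hk_eq⟩
end

section
/- Let a > 0, q > 0, c ≥ q/4 be real numbers and let T' > 0. If g : ℝ → ℝ satisfies g(0) = a, is differentiable on [0, T'] with g(t) > 0 and g′(t) = -(q/6)·a^{2 - 12c/q}·g(t)^{12c/q - 1} for every t ∈ [0, T'], then g(t) = a·(((6c - q)/3)·t + 1)^{q/(2q - 12c)} for every t ∈ [0, T']. -/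
/-- Uniqueness of the solution of the initial value problem for the warping
function in Theorem 5.4 of the paper: any positive solution on `[0, T']` of
`g' = -(q/6) a^(2 - 12c/q) g^(12c/q - 1)` with `g 0 = a` coincides with
`t ↦ a * (((6c - q)/3) t + 1) ^ (q/(2q - 12c))`. -/
theorem stmt_5 (a q c T' : ℝ) (ha : 0 < a) (hq : 0 < q) (hc : q / 4 ≤ c)
    (hT' : 0 < T') (g : ℝ → ℝ)
    (hg0 : g 0 = a)
    (hgpos : ∀ t ∈ Set.Icc (0 : ℝ) T', 0 < g t)
    (hgderiv : ∀ t ∈ Set.Icc (0 : ℝ) T',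
      HasDerivWithinAt g
        (-(q / 6) * a ^ (2 - 12 * c / q) * (g t) ^ (12 * c / q - 1))
        (Set.Icc (0 : ℝ) T') t) :
    ∀ t ∈ Set.Icc (0 : ℝ) T',
      g t = a * ((6 * c - q) / 3 * t + 1) ^ (q / (2 * q - 12 * c)) := by
  have hq' : q ≠ 0 := hq.ne'
  set β : ℝ := 2 - 12 * c / q with hβdef
  have hβle : β ≤ -1 := by
    have h3 : 3 ≤ 12 * c / q := by
      rw [le_div_iff₀ hq]; linarith
    simp only [hβdef]; linarith
  have hβ : β ≠ 0 := by linarith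
  set K : ℝ := (6 * c - q) / 3 * a ^ β with hK
  have hderiv0 : ∀ t ∈ Set.Icc (0:ℝ) T',
      HasDerivWithinAt (fun t => g t ^ β - K * t) 0 (Set.Icc (0:ℝ) T') t := by
    intro t ht
    have hgt := hgpos t ht
    have h1 := (Real.hasDerivAt_rpow_const (x := g t) (p := β)
      (Or.inl hgt.ne')).comp_hasDerivWithinAt t (hgderiv t ht)
    have h2 : HasDerivWithinAt (fun t : ℝ => K * t) K (Set.Icc (0:ℝ) T') t :=
      by simpa using ((hasDerivAt_id t).const_mul K).hasDerivWithinAt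
    have h3 := h1.sub h2
    have hpow : g t ^ (β - 1) * g t ^ (12 * c / q - 1) = 1 := by
      rw [← Real.rpow_add hgt]
      have he : β - 1 + (12 * c / q - 1) = 0 := by
        simp only [hβdef]; ring
      rw [he, Real.rpow_zero]
    have hKe : β * g t ^ (β - 1) * (-(q / 6) * a ^ β * g t ^ (12 * c / q - 1)) - K
        = 0 := by
      have : β * g t ^ (β - 1) * (-(q / 6) * a ^ β * g t ^ (12 * c / q - 1))
          = (β * (-(q / 6))) * a ^ β * (g t ^ (β - 1) * g t ^ (12 * c / q - 1)) := by
        ring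
      rw [this, hpow, mul_one, hK]
      have : β * (-(q / 6)) = (6 * c - q) / 3 := by
        rw [hβdef]; field_simp; ring
      rw [this, sub_self]
    rw [hKe] at h3
    exact h3
  have hconst : ∀ t ∈ Set.Icc (0:ℝ) T',
      g t ^ β - K * t = g 0 ^ β - K * 0 := by
    apply constant_of_derivWithin_zero
    · intro x hx
      exact (hderiv0 x hx).differentiableWithinAt
    · intro x hx
      have hx' : x ∈ Set.Icc (0:ℝ) T' := Set.mem_Icc_of_Ico hx
      exact ((hderiv0 x hx').derivWithin (uniqueDiffOn_Icc hT' x hx'))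
  intro t ht
  have hgt := hgpos t ht
  have hφ : g t ^ β = a ^ β * ((6 * c - q) / 3 * t + 1) := by
    have := hconst t ht
    rw [hg0] at this
    rw [hK] at this
    nlinarith [this]
  set s : ℝ := (6 * c - q) / 3 * t + 1 with hs
  have has : 0 < a ^ β := Real.rpow_pos_of_pos ha β
  have hsp : 0 < s := by
    have hgβ : 0 < g t ^ β := Real.rpow_pos_of_pos hgt β
    nlinarith [hφ]
  have hinv : (g t ^ β) ^ β⁻¹ = g t := by
    rw [← Real.rpow_mul hgt.le, mul_inv_cancel₀ hβ, Real.rpow_one]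
  have hβinv : β⁻¹ = q / (2 * q - 12 * c) := by
    have hb : β = (2 * q - 12 * c) / q := by
      rw [hβdef]; field_simp
    rw [hb, inv_div]
  calc g t = (g t ^ β) ^ β⁻¹ := hinv.symm
    _ = (a ^ β * s) ^ β⁻¹ := by rw [hφ]
    _ = (a ^ β) ^ β⁻¹ * s ^ β⁻¹ := Real.mul_rpow has.le hsp.le
    _ = a * s ^ (q / (2 * q - 12 * c)) := by
        rw [← Real.rpow_mul ha.le, mul_inv_cancel₀ hβ, Real.rpow_one, hβinv]
end
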